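/- arXiv:2104.07093 — 5 statements merged into one kernel-verified Lean document; each statement's English description precedes it below -/
import Mathlib

section
/- If B and C are positive bounded linear operators on a complex Hilbert space H, then ‖√B − √C‖ ≤ √(‖B − C‖), where √B and √C denote the unique positive square roots of B and C. -/
/-! Since `a ≤ b + ‖a - b‖` and `(√b + s)² = b + 2s√b + s² ≥ b + s²`, taking `s = √‖a - b‖` gives
`a ≤ (√b + s)²`, so operator monotonicity of the square root yields `√a ≤ √b + s`. By symmetry also
`√b ≤ √a + s`, and for the self-adjoint element `√a - √b` these two-sided bounds control its norm. -/

section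

variable {A : Type*} [CStarAlgebra A] [PartialOrder A] [StarOrderedRing A]

lemma IsSelfAdjoint.norm_le_of_le_algebraMap {a : A} {r : ℝ} (ha : IsSelfAdjoint a) (hr : 0 ≤ r)
    (h : a ≤ algebraMap ℝ A r) (h_neg : -a ≤ algebraMap ℝ A r) : ‖a‖ ≤ r := by
  rcases subsingleton_or_nontrivial A with _ | _
  · simpa [Subsingleton.elim a 0] using hr
  rw [le_algebraMap_iff_spectrum_le] at h
  rw [neg_le, ← map_neg, algebraMap_le_iff_le_spectrum] at h_neg
  rcases CStarAlgebra.norm_or_neg_norm_mem_spectrum ha with hmem | hmem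
  · exact h _ hmem
  · linarith [h_neg _ hmem]

namespace CFC

lemma sqrt_le_sqrt_add_algebraMap {a b : A} {s : ℝ} (hb : 0 ≤ b) (hs : 0 ≤ s)
    (hab : a ≤ b + algebraMap ℝ A (s ^ 2)) : sqrt a ≤ sqrt b + algebraMap ℝ A s := by
  set c := sqrt b + algebraMap ℝ A s
  have hc : 0 ≤ c := add_nonneg (sqrt_nonneg b) (algebraMap_nonneg A hs)
  have hc_sq : c * c = b + (2 * s) • sqrt b + algebraMap ℝ A (s ^ 2) := by
    simp only [c, add_mul, mul_add, sqrt_mul_sqrt_self b, ← map_mul, ← Algebra.commutes s,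
      ← Algebra.smul_def, two_mul, add_smul, sq]
    abel
  have hab' : a ≤ c * c := by
    refine hab.trans ?_
    rw [hc_sq, add_le_add_iff_right]
    exact le_add_of_nonneg_right (smul_nonneg (by positivity) (sqrt_nonneg b))
  calc sqrt a ≤ sqrt (c * c) := sqrt_le_sqrt a _ hab'
    _ = c := sqrt_mul_self c hc

lemma sqrt_le_sqrt_add_sqrt_norm_sub {a b : A} (ha : IsSelfAdjoint a) (hb : 0 ≤ b) :
    sqrt a ≤ sqrt b + algebraMap ℝ A √‖a - b‖ := by
  refine sqrt_le_sqrt_add_algebraMap hb (Real.sqrt_nonneg _) ?_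
  rw [Real.sq_sqrt (norm_nonneg _), ← sub_le_iff_le_add']
  exact (ha.sub hb.isSelfAdjoint).le_algebraMap_norm_self

lemma norm_sqrt_sub_sqrt_le {a b : A} (ha : 0 ≤ a) (hb : 0 ≤ b) :
    ‖sqrt a - sqrt b‖ ≤ √‖a - b‖ := by
  refine ((sqrt_nonneg a).isSelfAdjoint.sub (sqrt_nonneg b).isSelfAdjoint).norm_le_of_le_algebraMap
    (Real.sqrt_nonneg _) ?_ ?_
  · exact sub_le_iff_le_add'.mpr (sqrt_le_sqrt_add_sqrt_norm_sub ha.isSelfAdjoint hb)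
  · rw [neg_sub, sub_le_iff_le_add', norm_sub_rev]
    exact sqrt_le_sqrt_add_sqrt_norm_sub hb.isSelfAdjoint ha

end CFC

end

/-- If `B` and `C` are positive bounded linear operators on a complex Hilbert space `H`,
then `‖√B − √C‖ ≤ √‖B − C‖`, where `CFC.sqrt` is the unique positive square root. -/
theorem sqrt_diff_norm_le_sqrt_norm_diff {H : Type*} [NormedAddCommGroup H]
    [InnerProductSpace ℂ H] [CompleteSpace H]
    (B C : H →L[ℂ] H) (hB : 0 ≤ B) (hC : 0 ≤ C) :
    ‖CFC.sqrt B - CFC.sqrt C‖ ≤ Real.sqrt ‖B - C‖ :=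
  CFC.norm_sqrt_sub_sqrt_le hB hC
end

section
/- Let (A_n) be a sequence of self-adjoint bounded linear operators and (B_n) a sequence of positive bounded linear operators on a complex Hilbert space H. Suppose there is a positive operator M ∈ B(H) such that |A_n| ≤ M for all n, that A_n B_n = B_n A_n and B_n M = M B_n for all n, and that (B_n) converges weakly to 0. Then (A_n B_n) converges weakly to 0. -/
open Filter Topology
open scoped InnerProductSpace

/-!
Writing `Bₙ = Sₙ²` with `Sₙ = √Bₙ`, Cauchy–Schwarz gives
`|⟪AₙBₙx, y⟫| = |⟪Sₙx, SₙAₙ*y⟫| ≤ √⟪Bₙx, x⟫ · √‖Bₙ‖ · ‖Aₙ‖ · ‖y‖`.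
Here `‖Aₙ‖ = ‖|Aₙ|‖ ≤ ‖M‖`, the weakly convergent sequence `(Bₙ)` is norm bounded by the
uniform boundedness principle, and `⟪Bₙx, x⟫ → 0`.
-/

theorem exists_norm_le_of_forall_bddAbove_norm_inner {𝕜 E F ι : Type*} [RCLike 𝕜]
    [NormedAddCommGroup E] [InnerProductSpace 𝕜 E] [CompleteSpace E]
    [NormedAddCommGroup F] [InnerProductSpace 𝕜 F] [CompleteSpace F] {T : ι → E →L[𝕜] F}
    (h : ∀ x y, BddAbove (Set.range fun i => ‖⟪T i x, y⟫_𝕜‖)) :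
    ∃ C, ∀ i, ‖T i‖ ≤ C := by
  refine banach_steinhaus fun x => ?_
  have hx : ∀ y, ∃ C, ∀ i, ‖innerSL 𝕜 (T i x) y‖ ≤ C := fun y => by
    obtain ⟨C, hC⟩ := h x y
    exact ⟨C, fun i => hC ⟨i, rfl⟩⟩
  obtain ⟨C, hC⟩ := banach_steinhaus hx
  exact ⟨C, fun i => by simpa only [innerSL_apply_norm] using hC i⟩

section Positive

variable {H : Type*} [NormedAddCommGroup H] [InnerProductSpace ℂ H] [CompleteSpace H]
  {B : H →L[ℂ] H}

theorem inner_sqrt_apply_sqrt_apply (hB : 0 ≤ B) (x y : H) :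
    ⟪CFC.sqrt B x, CFC.sqrt B y⟫_ℂ = ⟪B x, y⟫_ℂ := by
  symm
  calc ⟪B x, y⟫_ℂ = ⟪(CFC.sqrt B * CFC.sqrt B) x, y⟫_ℂ := by rw [CFC.sqrt_mul_sqrt_self B hB]
    _ = ⟪CFC.sqrt B x, CFC.sqrt B y⟫_ℂ :=
      (IsSelfAdjoint.of_nonneg (CFC.sqrt_nonneg B)).isSymmetric _ _

theorem norm_sqrt_apply_eq_sqrt_re_inner (hB : 0 ≤ B) (x : H) :
    ‖CFC.sqrt B x‖ = √(⟪B x, x⟫_ℂ).re := by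
  rw [norm_eq_sqrt_re_inner (𝕜 := ℂ), inner_sqrt_apply_sqrt_apply hB]
  rfl

theorem norm_sqrt_eq_sqrt_norm (hB : 0 ≤ B) : ‖CFC.sqrt B‖ = √‖B‖ := by
  rw [eq_comm, Real.sqrt_eq_iff_mul_self_eq (norm_nonneg _) (norm_nonneg _),
    ← CStarRing.norm_star_mul_self, (CFC.sqrt_nonneg B).star_eq, CFC.sqrt_mul_sqrt_self B hB]

theorem norm_inner_apply_le_of_nonneg (hB : 0 ≤ B) (x y : H) :
    ‖⟪B x, y⟫_ℂ‖ ≤ √(⟪B x, x⟫_ℂ).re * (√‖B‖ * ‖y‖) := by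
  set S := CFC.sqrt B
  calc ‖⟪B x, y⟫_ℂ‖ = ‖⟪S x, S y⟫_ℂ‖ := by rw [inner_sqrt_apply_sqrt_apply hB]
    _ ≤ ‖S x‖ * ‖S y‖ := norm_inner_le_norm _ _
    _ ≤ √(⟪B x, x⟫_ℂ).re * (√‖B‖ * ‖y‖) := by
      rw [norm_sqrt_apply_eq_sqrt_re_inner hB, ← norm_sqrt_eq_sqrt_norm hB]
      gcongr
      exact S.le_opNorm y

end Positive

theorem mul_weak_tendsto_zero_general {H : Type*} [NormedAddCommGroup H]
    [InnerProductSpace ℂ H] [CompleteSpace H]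
    (A B : ℕ → H →L[ℂ] H) (M : H →L[ℂ] H)
    (hB : ∀ n, 0 ≤ B n)
    (habs : ∀ n, CFC.sqrt (star (A n) * A n) ≤ M)
    (hconv : ∀ x y : H, Tendsto (fun n => ⟪B n x, y⟫_ℂ) atTop (𝓝 0)) :
    ∀ x y : H, Tendsto (fun n => ⟪(A n * B n) x, y⟫_ℂ) atTop (𝓝 0) := by
  intro x y
  obtain ⟨K, hK⟩ := exists_norm_le_of_forall_bddAbove_norm_inner fun x y =>
    (hconv x y).norm.bddAbove_range
  have hAM : ∀ n, ‖star (A n)‖ ≤ ‖M‖ := fun n => by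
    rw [norm_star, ← CFC.norm_abs]
    exact CStarAlgebra.norm_le_norm_of_nonneg_of_le (CFC.abs_nonneg _) (habs n)
  have bound : ∀ n, ‖⟪(A n * B n) x, y⟫_ℂ‖ ≤ √(⟪B n x, x⟫_ℂ).re * (√K * (‖M‖ * ‖y‖)) := by
    intro n
    calc ‖⟪(A n * B n) x, y⟫_ℂ‖ = ‖⟪B n x, star (A n) y⟫_ℂ‖ := by
          rw [mul_apply_eq_comp, ContinuousLinearMap.star_eq_adjoint,
            ContinuousLinearMap.adjoint_inner_right]
      _ ≤ √(⟪B n x, x⟫_ℂ).re * (√‖B n‖ * ‖star (A n) y‖) :=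
          norm_inner_apply_le_of_nonneg (hB n) _ _
      _ ≤ √(⟪B n x, x⟫_ℂ).re * (√K * (‖M‖ * ‖y‖)) := by
          gcongr
          · exact hK n
          · exact (ContinuousLinearMap.le_opNorm _ y).trans (by gcongr; exact hAM n)
  have hlim : Tendsto (fun n => √(⟪B n x, x⟫_ℂ).re * (√K * (‖M‖ * ‖y‖))) atTop (𝓝 0) := by
    simpa using ((Complex.continuous_re.tendsto 0).comp (hconv x x)).sqrt.mul_const _
  exact squeeze_zero_norm bound hlim

/-- If `(Aₙ)` are self-adjoint with `|Aₙ| ≤ M` (`M` positive), `(Bₙ)` are positive,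
`AₙBₙ = BₙAₙ`, `BₙM = MBₙ`, and `Bₙ → 0` weakly, then `AₙBₙ → 0` weakly. -/
theorem mul_weak_tendsto_zero {H : Type*} [NormedAddCommGroup H]
    [InnerProductSpace ℂ H] [CompleteSpace H]
    (A B : ℕ → H →L[ℂ] H) (M : H →L[ℂ] H)
    (hA : ∀ n, IsSelfAdjoint (A n)) (hB : ∀ n, 0 ≤ B n) (hM : 0 ≤ M)
    (habs : ∀ n, CFC.sqrt (star (A n) * A n) ≤ M)
    (hcomm : ∀ n, A n * B n = B n * A n)
    (hcommM : ∀ n, B n * M = M * B n)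
    (hconv : ∀ x y : H, Tendsto (fun n => ⟪B n x, y⟫_ℂ) atTop (𝓝 0)) :
    ∀ x y : H, Tendsto (fun n => ⟪(A n * B n) x, y⟫_ℂ) atTop (𝓝 0) :=
  mul_weak_tendsto_zero_general A B M hB habs hconv
end

section
/- Let (A_n) be a sequence of self-adjoint bounded linear operators and (B_n) a sequence of positive bounded linear operators on a complex Hilbert space H. Suppose there is α ≥ 0 such that |A_n| ≤ α·I for all n (I being the identity operator), that A_n B_n = B_n A_n for all n, and that (B_n) converges weakly to 0. Then (A_n B_n) converges weakly to 0. -/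
open Filter Topology
open scoped InnerProductSpace

/-!
A positive operator `B` satisfies `‖B x‖² ≤ ‖B‖ · re ⟪B x, x⟫` (write `B = √B √B`), and a weakly
convergent sequence of operators is norm bounded by the uniform boundedness principle. Hence a
weakly null sequence of positive operators is strongly null, and it stays strongly null after
multiplication on the left by the operators `Aₙ`, which are uniformly bounded since
`‖Aₙ‖ = ‖|Aₙ|‖ ≤ ‖α • 1‖`.
-/

lemma CFC.norm_le_norm_of_abs_le {A : Type*} [CStarAlgebra A] [PartialOrder A]
    [StarOrderedRing A] {a b : A} (h : CFC.abs a ≤ b) : ‖a‖ ≤ ‖b‖ :=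
  CFC.norm_abs (a := a) ▸ CStarAlgebra.norm_le_norm_of_nonneg_of_le (CFC.abs_nonneg a) h

namespace ContinuousLinearMap

lemma exists_forall_norm_le_of_forall_inner_bounded {𝕜 E F ι : Type*} [RCLike 𝕜]
    [NormedAddCommGroup E] [NormedSpace 𝕜 E] [CompleteSpace E]
    [NormedAddCommGroup F] [InnerProductSpace 𝕜 F] [CompleteSpace F] {T : ι → E →L[𝕜] F}
    (h : ∀ x y, ∃ C, ∀ i, ‖⟪T i x, y⟫_𝕜‖ ≤ C) : ∃ C, ∀ i, ‖T i‖ ≤ C := by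
  refine banach_steinhaus fun x => ?_
  obtain ⟨C, hC⟩ := banach_steinhaus (g := fun i => innerSL 𝕜 (T i x)) (h x)
  exact ⟨C, fun i => by simpa only [innerSL_apply_norm] using hC i⟩

variable {H : Type*} [NormedAddCommGroup H] [InnerProductSpace ℂ H] [CompleteSpace H]

lemma norm_cfcSqrt_apply_sq {B : H →L[ℂ] H} (hB : 0 ≤ B) (x : H) :
    ‖CFC.sqrt B x‖ ^ 2 = (⟪B x, x⟫_ℂ).re := by
  have hsqrt : (CFC.sqrt B).IsPositive := (nonneg_iff_isPositive _).mp (CFC.sqrt_nonneg B)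
  rw [← inner_self_eq_norm_sq (𝕜 := ℂ), ← hsqrt.inner_left_eq_inner_right,
    ← mul_apply_eq_comp, CFC.sqrt_mul_sqrt_self B hB, RCLike.re_to_complex]

lemma norm_apply_sq_le_norm_mul_re_inner {B : H →L[ℂ] H} (hB : 0 ≤ B) (x : H) :
    ‖B x‖ ^ 2 ≤ ‖B‖ * (⟪B x, x⟫_ℂ).re := by
  calc ‖B x‖ ^ 2 = ‖CFC.sqrt B (CFC.sqrt B x)‖ ^ 2 := by
        rw [← mul_apply_eq_comp, CFC.sqrt_mul_sqrt_self B hB]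
    _ ≤ (‖CFC.sqrt B‖ * ‖CFC.sqrt B x‖) ^ 2 := by gcongr; exact le_opNorm _ _
    _ = ‖B‖ * (⟪B x, x⟫_ℂ).re := by
        rw [mul_pow, CFC.norm_sqrt B hB, Real.sq_sqrt (norm_nonneg B), norm_cfcSqrt_apply_sq hB]

lemma tendsto_apply_zero_of_nonneg_of_weak_tendsto_zero {B : ℕ → H →L[ℂ] H}
    (hB : ∀ n, 0 ≤ B n) (hconv : ∀ x y : H, Tendsto (fun n => ⟪B n x, y⟫_ℂ) atTop (𝓝 0))
    (x : H) : Tendsto (fun n => B n x) atTop (𝓝 0) := by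
  obtain ⟨M, hM⟩ := exists_forall_norm_le_of_forall_inner_bounded fun x y => by
    obtain ⟨C, hC⟩ := (hconv x y).norm.bddAbove_range
    exact ⟨C, fun n => hC (Set.mem_range_self n)⟩
  have hre : Tendsto (fun n => (⟪B n x, x⟫_ℂ).re) atTop (𝓝 0) := by
    simpa [Function.comp_def] using (Complex.continuous_re.tendsto 0).comp (hconv x x)
  have hbound (n : ℕ) : ‖B n x‖ ^ 2 ≤ M * (⟪B n x, x⟫_ℂ).re :=
    (norm_apply_sq_le_norm_mul_re_inner (hB n) x).trans <| mul_le_mul_of_nonneg_right (hM n)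
      (((nonneg_iff_isPositive _).mp (hB n)).re_inner_nonneg_left x)
  have hsq : Tendsto (fun n => ‖B n x‖ ^ 2) atTop (𝓝 0) :=
    squeeze_zero (fun n => by positivity) hbound (by simpa using hre.const_mul M)
  rw [tendsto_zero_iff_norm_tendsto_zero]
  simpa using hsq.sqrt

end ContinuousLinearMap

theorem mul_weak_tendsto_zero_of_abs_le_smul_id_general {H : Type*} [NormedAddCommGroup H]
    [InnerProductSpace ℂ H] [CompleteSpace H]
    (A B : ℕ → H →L[ℂ] H) (α : ℝ)
    (hB : ∀ n, 0 ≤ B n)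
    (habs : ∀ n, CFC.sqrt (star (A n) * A n) ≤ α • (1 : H →L[ℂ] H))
    (hconv : ∀ x y : H, Tendsto (fun n => ⟪B n x, y⟫_ℂ) atTop (𝓝 0)) :
    ∀ x y : H, Tendsto (fun n => ⟪(A n * B n) x, y⟫_ℂ) atTop (𝓝 0) := by
  intro x y
  set C := ‖α • (1 : H →L[ℂ] H)‖
  have hBx : Tendsto (fun n => ‖B n x‖) atTop (𝓝 0) := tendsto_norm_zero.comp
    (ContinuousLinearMap.tendsto_apply_zero_of_nonneg_of_weak_tendsto_zero hB hconv x)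
  have hbound (n : ℕ) : ‖(A n * B n) x‖ ≤ C * ‖B n x‖ :=
    calc ‖(A n * B n) x‖ ≤ ‖A n‖ * ‖B n x‖ := (A n).le_opNorm _
      _ ≤ C * ‖B n x‖ := by gcongr; exact CFC.norm_le_norm_of_abs_le (habs n)
  have hABx : Tendsto (fun n => (A n * B n) x) atTop (𝓝 0) :=
    squeeze_zero_norm hbound (by simpa using hBx.const_mul C)
  simpa using hABx.inner (tendsto_const_nhds (x := y))

/-- If `(Aₙ)` are self-adjoint with `|Aₙ| ≤ α•I` for some `α ≥ 0`, `(Bₙ)` are positive,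
`AₙBₙ = BₙAₙ`, and `Bₙ → 0` weakly, then `AₙBₙ → 0` weakly. -/
theorem mul_weak_tendsto_zero_of_abs_le_smul_id {H : Type*} [NormedAddCommGroup H]
    [InnerProductSpace ℂ H] [CompleteSpace H]
    (A B : ℕ → H →L[ℂ] H) (α : ℝ) (hα : 0 ≤ α)
    (hA : ∀ n, IsSelfAdjoint (A n)) (hB : ∀ n, 0 ≤ B n)
    (habs : ∀ n, CFC.sqrt (star (A n) * A n) ≤ α • (1 : H →L[ℂ] H))
    (hcomm : ∀ n, A n * B n = B n * A n)
    (hconv : ∀ x y : H, Tendsto (fun n => ⟪B n x, y⟫_ℂ) atTop (𝓝 0)) :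
    ∀ x y : H, Tendsto (fun n => ⟪(A n * B n) x, y⟫_ℂ) atTop (𝓝 0) :=
  mul_weak_tendsto_zero_of_abs_le_smul_id_general A B α hB habs hconv
end

section
/- Let (A_n) and (B_n) be two sequences of positive bounded linear operators on a complex Hilbert space H such that A_n B_n = B_n A_n for all n. If both (A_n) and (B_n) converge weakly to 0, then (A_n B_n) converges weakly to 0. -/
open Filter Topology
open scoped InnerProductSpace

/-! A positive operator `A` satisfies `‖A y‖² ≤ ‖A‖ ⟪A y, y⟫` (write `A y = √A (√A y)`), so a
weakly null sequence of positive operators, being norm-bounded by Banach–Steinhaus, is strongly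
null. Then `⟪Aₙ Bₙ x, y⟫ = ⟪Bₙ x, Aₙ y⟫` is bounded by `sup ‖Bₙ‖ ‖x‖ ‖Aₙ y‖ → 0`. -/

theorem exists_forall_opNorm_le_of_tendsto_inner {𝕜 E F : Type*} [RCLike 𝕜]
    [NormedAddCommGroup E] [NormedSpace 𝕜 E] [CompleteSpace E]
    [NormedAddCommGroup F] [InnerProductSpace 𝕜 F] [CompleteSpace F]
    {T : ℕ → E →L[𝕜] F} {L : E → F → 𝕜}
    (h : ∀ x y, Tendsto (fun n => ⟪T n x, y⟫_𝕜) atTop (𝓝 (L x y))) :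
    ∃ C, ∀ n, ‖T n‖ ≤ C := by
  refine banach_steinhaus fun x => ?_
  obtain ⟨C, hC⟩ := banach_steinhaus (g := fun n => innerSL 𝕜 (T n x)) fun y => by
    obtain ⟨C, hC⟩ := (h x y).norm.bddAbove_range
    exact ⟨C, fun n => hC ⟨n, rfl⟩⟩
  exact ⟨C, fun n => by simpa [innerSL_apply_norm] using hC n⟩

section Positive

variable {H : Type*} [NormedAddCommGroup H] [InnerProductSpace ℂ H] [CompleteSpace H]

theorem norm_apply_sq_le_of_nonneg {A : H →L[ℂ] H} (hA : 0 ≤ A) (y : H) :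
    ‖A y‖ ^ 2 ≤ ‖A‖ * RCLike.re ⟪A y, y⟫_ℂ := by
  set s := CFC.sqrt A
  have hs : s.IsPositive := (s.nonneg_iff_isPositive).mp (CFC.sqrt_nonneg A)
  have hAy : A y = s (s y) := by
    rw [← CFC.sqrt_mul_sqrt_self A hA]
    rfl
  have hsy : ‖s y‖ ^ 2 = RCLike.re ⟪A y, y⟫_ℂ := by
    rw [hAy, hs.inner_left_eq_inner_right, inner_self_eq_norm_sq]
  calc ‖A y‖ ^ 2 ≤ (‖s‖ * ‖s y‖) ^ 2 := by
        gcongr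
        exact hAy ▸ s.le_opNorm _
    _ = ‖A‖ * RCLike.re ⟪A y, y⟫_ℂ := by
        rw [mul_pow, CFC.norm_sqrt A hA, Real.sq_sqrt (norm_nonneg _), hsy]

theorem tendsto_apply_zero_of_nonneg_of_tendsto_inner {A : ℕ → H →L[ℂ] H} (hA : ∀ n, 0 ≤ A n)
    (hAconv : ∀ x y : H, Tendsto (fun n => ⟪A n x, y⟫_ℂ) atTop (𝓝 0)) (y : H) :
    Tendsto (fun n => A n y) atTop (𝓝 0) := by
  obtain ⟨C, hC⟩ := exists_forall_opNorm_le_of_tendsto_inner hAconv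
  have hre : Tendsto (fun n => C * RCLike.re ⟪A n y, y⟫_ℂ) atTop (𝓝 0) := by
    simpa using ((RCLike.continuous_re.tendsto _).comp (hAconv y y)).const_mul C
  have hsq : Tendsto (fun n => ‖A n y‖ ^ 2) atTop (𝓝 0) := by
    refine squeeze_zero (fun n => by positivity) (fun n => ?_) hre
    have hApos := (A n).nonneg_iff_isPositive.mp (hA n)
    exact (norm_apply_sq_le_of_nonneg (hA n) y).trans
      (mul_le_mul_of_nonneg_right (hC n) (hApos.re_inner_nonneg_left y))
  rw [tendsto_zero_iff_norm_tendsto_zero]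
  simpa using hsq.sqrt

end Positive

theorem mul_weak_tendsto_zero_of_pos_general {H : Type*} [NormedAddCommGroup H]
    [InnerProductSpace ℂ H] [CompleteSpace H]
    (A B : ℕ → H →L[ℂ] H)
    (hA : ∀ n, 0 ≤ A n)
    (hAconv : ∀ x y : H, Tendsto (fun n => ⟪A n x, y⟫_ℂ) atTop (𝓝 0))
    (hBconv : ∀ x y : H, Tendsto (fun n => ⟪B n x, y⟫_ℂ) atTop (𝓝 0)) :
    ∀ x y : H, Tendsto (fun n => ⟪(A n * B n) x, y⟫_ℂ) atTop (𝓝 0) := by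
  intro x y
  obtain ⟨C, hC⟩ := exists_forall_opNorm_le_of_tendsto_inner hBconv
  have hAy := (tendsto_apply_zero_of_nonneg_of_tendsto_inner hA hAconv y).norm.const_mul (C * ‖x‖)
  rw [norm_zero, mul_zero] at hAy
  rw [tendsto_zero_iff_norm_tendsto_zero]
  refine squeeze_zero (fun n => norm_nonneg _) (fun n => ?_) hAy
  calc ‖⟪(A n * B n) x, y⟫_ℂ‖ = ‖⟪B n x, A n y⟫_ℂ‖ := by
        rw [← ((A n).nonneg_iff_isPositive.mp (hA n)).inner_left_eq_inner_right]
        rfl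
    _ ≤ ‖B n x‖ * ‖A n y‖ := norm_inner_le_norm _ _
    _ ≤ C * ‖x‖ * ‖A n y‖ := by
        gcongr
        exact (B n).le_of_opNorm_le (hC n) x

/-- If `(Aₙ)` and `(Bₙ)` are commuting sequences of positive operators, both converging
weakly to `0`, then `(AₙBₙ)` converges weakly to `0`. -/
theorem mul_weak_tendsto_zero_of_pos {H : Type*} [NormedAddCommGroup H]
    [InnerProductSpace ℂ H] [CompleteSpace H]
    (A B : ℕ → H →L[ℂ] H)
    (hA : ∀ n, 0 ≤ A n) (hB : ∀ n, 0 ≤ B n)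
    (hcomm : ∀ n, A n * B n = B n * A n)
    (hAconv : ∀ x y : H, Tendsto (fun n => ⟪A n x, y⟫_ℂ) atTop (𝓝 0))
    (hBconv : ∀ x y : H, Tendsto (fun n => ⟪B n x, y⟫_ℂ) atTop (𝓝 0)) :
    ∀ x y : H, Tendsto (fun n => ⟪(A n * B n) x, y⟫_ℂ) atTop (𝓝 0) :=
  mul_weak_tendsto_zero_of_pos_general A B hA hAconv hBconv
end

section
/- Let S be the unilateral shift on ℓ²(ℕ; ℂ), and set A_n = Sⁿ + (Sⁿ)*. Then (A_n) converges weakly to 0, but the sequence of absolute values (|A_n|) does not converge weakly to 0. In particular, weak convergence of a sequence of self-adjoint operators to 0 does not imply weak convergence of their absolute values to 0. -/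
set_option synthInstance.maxHeartbeats 1000000
set_option maxHeartbeats 1000000

open Filter Topology
open scoped InnerProductSpace

instance lp_two_complex_clm_nonUnitalCFC_real :
    NonUnitalContinuousFunctionalCalculus ℝ
      (lp (fun _ : ℕ => ℂ) 2 →L[ℂ] lp (fun _ : ℕ => ℂ) 2) IsSelfAdjoint :=
  IsSelfAdjoint.instNonUnitalContinuousFunctionalCalculus

/-!
`(S*)ⁿ` shifts every vector of `ℓ²` to the left by `n` places, so `(S*)ⁿ → 0` strongly, and hence
both `(S*)ⁿ` and `Sⁿ = ((S*)ⁿ)*` tend to `0` weakly.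

For the absolute values, test against `e₀`: `Aₙ e₀ = eₙ` for `n ≥ 1`, and for any operator `T`
the inequality `|T|² ≤ ‖|T|‖ |T| = ‖T‖ |T|` gives `‖T x‖² ≤ ‖T‖ ⟪|T| x, x⟫`. Since `S* S = 1`
makes `‖Aₙ‖ ≤ 2`, this yields `⟪|Aₙ| e₀, e₀⟫ ≥ 1/2` for all `n ≥ 1`.
-/

lemma CFC.mul_self_le_norm_smul {A : Type*} [NonUnitalCStarAlgebra A] [PartialOrder A]
    [StarOrderedRing A] {a : A} (ha : 0 ≤ a) : a * a ≤ ‖a‖ • a := by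
  calc a * a = sqrt a * (sqrt a * sqrt a) * sqrt a := by
        rw [← mul_assoc, sqrt_mul_sqrt_self a, mul_assoc, sqrt_mul_sqrt_self a]
    _ = star (sqrt a) * a * sqrt a := by rw [(sqrt_nonneg a).star_eq, sqrt_mul_sqrt_self a]
    _ ≤ ‖a‖ • (star (sqrt a) * sqrt a) :=
        CStarAlgebra.star_left_conjugate_le_norm_smul (.of_nonneg ha)
    _ = ‖a‖ • a := by rw [(sqrt_nonneg a).star_eq, sqrt_mul_sqrt_self a]

namespace ContinuousLinearMap

lemma tendsto_inner_add_star_apply_of_tendsto_star_apply {𝕜 E : Type*} [RCLike 𝕜]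
    [NormedAddCommGroup E] [InnerProductSpace 𝕜 E] [CompleteSpace E] (T : ℕ → E →L[𝕜] E)
    (hT : ∀ x, Tendsto (fun n => star (T n) x) atTop (𝓝 0)) (x y : E) :
    Tendsto (fun n => ⟪(T n + star (T n)) x, y⟫_𝕜) atTop (𝓝 0) := by
  have h := ((tendsto_const_nhds (x := x)).inner (𝕜 := 𝕜) (hT y)).add
    ((hT x).inner (tendsto_const_nhds (x := y)))
  simp only [inner_zero_left, inner_zero_right, add_zero] at h
  refine h.congr fun n => ?_
  rw [add_apply, inner_add_left, star_eq_adjoint, adjoint_inner_right]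

lemma norm_apply_sq_le_norm_mul_re_inner_abs {H : Type*} [NormedAddCommGroup H]
    [InnerProductSpace ℂ H] [CompleteSpace H] (T : H →L[ℂ] H) (x : H) :
    ‖T x‖ ^ 2 ≤ ‖T‖ * RCLike.re ⟪CFC.abs T x, x⟫_ℂ := by
  have hle : star T * T ≤ ‖T‖ • CFC.abs T := by
    simpa only [CFC.abs_mul_abs, CFC.norm_abs] using CFC.mul_self_le_norm_smul (CFC.abs_nonneg T)
  have h := ((le_def _ _).mp hle).re_inner_nonneg_left x
  rw [sub_apply, inner_sub_left, map_sub, smul_apply, RCLike.real_smul_eq_coe_smul (K := ℂ),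
    inner_smul_real_left, RCLike.smul_re, star_eq_adjoint, mul_apply_eq_comp,
    adjoint_inner_left, inner_self_eq_norm_sq] at h
  linarith

end ContinuousLinearMap

lemma lp.tendsto_norm_of_apply_eq_apply_add {E : Type*} [NormedAddCommGroup E] {p : ENNReal}
    [Fact (1 ≤ p)] (hp : 0 < p.toReal) (f : lp (fun _ : ℕ => E) p)
    (g : ℕ → lp (fun _ : ℕ => E) p) (hg : ∀ n k, g n k = f (k + n)) :
    Tendsto (fun n => ‖g n‖) atTop (𝓝 0) := by
  have hpow : Tendsto (fun n => ‖g n‖ ^ p.toReal) atTop (𝓝 0) := by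
    simpa only [lp.norm_rpow_eq_tsum hp, hg] using
      tendsto_sum_nat_add fun k => ‖f k‖ ^ p.toReal
  have hroot := hpow.rpow_const (p := p.toReal⁻¹) (.inr (inv_nonneg.mpr hp.le))
  rw [Real.zero_rpow (inv_ne_zero hp.ne')] at hroot
  refine hroot.congr fun n => ?_
  rw [Real.rpow_rpow_inv (norm_nonneg (g n)) hp.ne']

section UnilateralShift

local notation "ℓ²" => lp (fun _ : ℕ => ℂ) 2

def IsUnilateralShift (S : ℓ² →L[ℂ] ℓ²) : Prop :=
  ∀ f : ℓ², (S f) 0 = 0 ∧ ∀ k, (S f) (k + 1) = f k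

namespace IsUnilateralShift

variable {S : ℓ² →L[ℂ] ℓ²}

lemma apply_single (hS : IsUnilateralShift S) (k : ℕ) :
    S (lp.single 2 k 1) = lp.single 2 (k + 1) 1 := by
  ext (_ | j)
  · simp [(hS _).1]
  · simp [(hS _).2, Pi.single_apply]

lemma pow_apply_single_zero (hS : IsUnilateralShift S) (n : ℕ) :
    (S ^ n) (lp.single 2 0 1) = lp.single 2 n 1 := by
  induction n with
  | zero => rfl
  | succ n ih => rw [pow_succ', mul_apply_eq_comp, ih, hS.apply_single]

lemma star_apply (hS : IsUnilateralShift S) (y : ℓ²) (k : ℕ) : (star S y) k = y (k + 1) := by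
  have h : ⟪lp.single 2 k 1, star S y⟫_ℂ = ⟪lp.single 2 (k + 1) 1, y⟫_ℂ := by
    rw [ContinuousLinearMap.star_eq_adjoint, ContinuousLinearMap.adjoint_inner_right,
      hS.apply_single]
  simpa [lp.inner_single_left] using h

lemma star_pow_apply (hS : IsUnilateralShift S) (n : ℕ) (y : ℓ²) (k : ℕ) :
    ((star S ^ n) y) k = y (k + n) := by
  induction n generalizing k with
  | zero => rfl
  | succ n ih => rw [pow_succ', mul_apply_eq_comp, hS.star_apply, ih, add_assoc, add_comm 1]

lemma tendsto_star_pow_apply (hS : IsUnilateralShift S) (y : ℓ²) :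
    Tendsto (fun n => (star S ^ n) y) atTop (𝓝 0) :=
  tendsto_zero_iff_norm_tendsto_zero.mpr <|
    lp.tendsto_norm_of_apply_eq_apply_add (by norm_num) y _ fun n => hS.star_pow_apply n y

lemma star_mul_self (hS : IsUnilateralShift S) : star S * S = 1 := by
  ext f k
  rw [mul_apply_eq_comp, hS.star_apply, (hS f).2, one_apply_eq_self]

lemma norm_le_one (hS : IsUnilateralShift S) : ‖S‖ ≤ 1 := by
  have h : ‖S‖ * ‖S‖ ≤ 1 := by
    rw [← CStarRing.norm_star_mul_self, hS.star_mul_self]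
    exact ContinuousLinearMap.norm_id_le
  nlinarith [norm_nonneg S]

lemma norm_pow_le_one (hS : IsUnilateralShift S) (n : ℕ) : ‖S ^ n‖ ≤ 1 := by
  induction n with
  | zero => exact ContinuousLinearMap.norm_id_le
  | succ n ih =>
    rw [pow_succ]
    exact (norm_mul_le _ _).trans (mul_le_one₀ ih (norm_nonneg _) hS.norm_le_one)

lemma norm_pow_add_star_le_two (hS : IsUnilateralShift S) (n : ℕ) :
    ‖S ^ n + star (S ^ n)‖ ≤ 2 := by
  calc ‖S ^ n + star (S ^ n)‖ ≤ ‖S ^ n‖ + ‖star (S ^ n)‖ := norm_add_le _ _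
    _ ≤ 2 := by rw [norm_star (S ^ n)]; linarith [hS.norm_pow_le_one n]

lemma pow_add_star_apply_single_zero (hS : IsUnilateralShift S) {n : ℕ} (hn : 0 < n) :
    (S ^ n + star (S ^ n)) (lp.single 2 0 1) = lp.single 2 n 1 := by
  have hstar : star (S ^ n) (lp.single 2 0 1) = 0 := by
    ext k
    rw [star_pow, hS.star_pow_apply, lp.single_apply_ne _ _ _ (by omega)]
    rfl
  rw [add_apply, hS.pow_apply_single_zero, hstar, add_zero]

lemma one_half_le_re_inner_abs_pow_add_star (hS : IsUnilateralShift S) {n : ℕ} (hn : 0 < n) :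
    1 / 2 ≤ RCLike.re ⟪CFC.abs (S ^ n + star (S ^ n)) (lp.single 2 0 1), lp.single 2 0 1⟫_ℂ := by
  have h := (S ^ n + star (S ^ n)).norm_apply_sq_le_norm_mul_re_inner_abs (lp.single 2 0 1)
  rw [hS.pow_add_star_apply_single_zero hn, lp.norm_single (by norm_num), norm_one,
    one_pow] at h
  have hr := ((ContinuousLinearMap.nonneg_iff_isPositive _).mp
    (CFC.abs_nonneg (S ^ n + star (S ^ n)))).re_inner_nonneg_left (lp.single 2 0 1)
  exact (div_le_iff₀' two_pos).mpr <|
    h.trans (mul_le_mul_of_nonneg_right (hS.norm_pow_add_star_le_two n) hr)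

end IsUnilateralShift

end UnilateralShift

/-- For the unilateral shift `S` on `ℓ²(ℕ; ℂ)` (characterized by `(Sf)₀ = 0` and
`(Sf)ₖ₊₁ = fₖ`), the self-adjoint operators `Aₙ = Sⁿ + (Sⁿ)*` converge weakly to `0`,
but their absolute values `|Aₙ| = √(Aₙ*Aₙ)` do not converge weakly to `0`. -/
theorem shift_sum_adjoint_weak_null_but_abs_not
    (S : lp (fun _ : ℕ => ℂ) 2 →L[ℂ] lp (fun _ : ℕ => ℂ) 2)
    (hS : ∀ f : lp (fun _ : ℕ => ℂ) 2, (S f) 0 = 0 ∧ ∀ k, (S f) (k + 1) = f k) :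
    (∀ x y : lp (fun _ : ℕ => ℂ) 2,
      Tendsto (fun n : ℕ => ⟪(S ^ n + star (S ^ n)) x, y⟫_ℂ) atTop (𝓝 0)) ∧
    ¬ (∀ x y : lp (fun _ : ℕ => ℂ) 2,
      Tendsto
        (fun n : ℕ =>
          ⟪CFC.sqrt (star (S ^ n + star (S ^ n)) * (S ^ n + star (S ^ n))) x, y⟫_ℂ)
        atTop (𝓝 0)) := by
  have hShift : IsUnilateralShift S := hS
  refine ⟨ContinuousLinearMap.tendsto_inner_add_star_apply_of_tendsto_star_apply _
    fun x => by simpa only [star_pow] using hShift.tendsto_star_pow_apply x, fun h => ?_⟩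
  have hre := (Complex.continuous_re.tendsto 0).comp (h (lp.single 2 0 1) (lp.single 2 0 1))
  have := ge_of_tendsto hre <| (eventually_gt_atTop 0).mono fun n hn =>
    hShift.one_half_le_re_inner_abs_pow_add_star hn
  norm_num at this
end
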